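/- arXiv:1902.01487 — 2 statements merged into one kernel-verified Lean document; each statement's English description precedes it below -/
import Mathlib

section
/- If f is a maximal row classifier, then for every j: nl_j^{**} ≤ nu_j^m ≤ |Upp(Y_j)|, where nl_j^{**} := n_{jj} − Ind(Σ_{i≠j} n_{ji}) and nu_j^m := n_{jj} + Σ_{i≠j}(n_{ji} + 2·n_{ij}). -/
open Finset

def conf {U : Type} [DecidableEq U] {m k : ℕ} (X : Fin m → Finset U)
    (Y : Fin k → Finset U) (f : Fin m → Fin k) (i j : Fin k) : ℕ :=
  ∑ s ∈ Finset.univ.filter (fun s => f s = i), (X s ∩ Y j).card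

def low {U : Type} [DecidableEq U] {m : ℕ} (X : Fin m → Finset U)
    (Z : Finset U) : Finset U :=
  (Finset.univ.filter (fun s => X s ⊆ Z)).biUnion X

def upp {U : Type} [DecidableEq U] {m : ℕ} (X : Fin m → Finset U)
    (Z : Finset U) : Finset U :=
  (Finset.univ.filter (fun s => (X s ∩ Z).Nonempty)).biUnion X

def hatY {U : Type} [DecidableEq U] {m k : ℕ} (X : Fin m → Finset U)
    (f : Fin m → Fin k) (i : Fin k) : Finset U :=
  (Finset.univ.filter (fun s => f s = i)).biUnion X

def ind (b : ℕ) : ℕ := if b = 0 then 0 else 1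

/-! Every granule `X s` is counted in row `f s` of the confusion matrix, so row `j` together with
twice column `j` off the diagonal adds up to `∑_{f s = j} |X s| + 2 ∑_{f s ≠ j} |X s ∩ Y j|`.
A granule with `f s = j` meets `Y j`, since its largest piece is the one in `Y j`; a granule with
`f s ≠ j` has a piece in `Y (f s)` at least as large as `X s ∩ Y j`, so `2 |X s ∩ Y j| ≤ |X s|`.
Either way `X s` contributes at most `|X s|`, and nothing unless it meets `Y j`, i.e. lies in
`Upp(Y j)`. -/

open Function in
theorem card_eq_sum_card_inter_of_cover {U κ : Type*} [DecidableEq U] [Fintype κ]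
    {Y : κ → Finset U} (hYdis : Pairwise (Disjoint on Y))
    (hYcov : ∀ u, ∃ i, u ∈ Y i) (A : Finset U) : A.card = ∑ i, (A ∩ Y i).card := by
  have hA : A = univ.biUnion (fun i => A ∩ Y i) := by
    ext u
    simpa using fun _ => hYcov u
  conv_lhs => rw [hA]
  exact card_biUnion fun i _ i' _ hii' =>
    (hYdis hii').mono inter_subset_right inter_subset_right

theorem inter_nonempty_of_forall_card_inter_le {U κ : Type*} [DecidableEq U]
    {Y : κ → Finset U} {A : Finset U} (hA : A.Nonempty)
    (hYcov : ∀ u, ∃ i, u ∈ Y i) {j : κ} (hmax : ∀ i, (A ∩ Y i).card ≤ (A ∩ Y j).card) :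
    (A ∩ Y j).Nonempty := by
  obtain ⟨u, hu⟩ := hA
  obtain ⟨i, hi⟩ := hYcov u
  exact card_pos.mp ((card_pos.mpr ⟨u, mem_inter.mpr ⟨hu, hi⟩⟩).trans_le (hmax i))

theorem two_mul_card_inter_le_card {U : Type*} [DecidableEq U] {A B C : Finset U}
    (hBC : Disjoint B C) (h : (A ∩ B).card ≤ (A ∩ C).card) : 2 * (A ∩ B).card ≤ A.card :=
  calc 2 * (A ∩ B).card ≤ (A ∩ B).card + (A ∩ C).card := by omega
    _ = (A ∩ B ∪ A ∩ C).card :=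
      (card_union_of_disjoint (hBC.mono inter_subset_right inter_subset_right)).symm
    _ ≤ A.card := card_le_card (union_subset inter_subset_left inter_subset_left)

section Confusion

open Function

variable {U : Type} [DecidableEq U] {m k : ℕ} (X : Fin m → Finset U) (Y : Fin k → Finset U)
  (f : Fin m → Fin k)

theorem sum_conf_row (hYdis : Pairwise (Disjoint on Y)) (hYcov : ∀ u, ∃ i, u ∈ Y i) (j : Fin k) :
    ∑ i, conf X Y f j i = ∑ s ∈ univ.filter (fun s => f s = j), (X s).card := by
  simp only [conf]
  rw [sum_comm]
  exact sum_congr rfl fun s _ => (card_eq_sum_card_inter_of_cover hYdis hYcov (X s)).symm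

theorem sum_conf_col (t : Finset (Fin k)) (j : Fin k) :
    ∑ i ∈ t, conf X Y f i j = ∑ s ∈ univ.filter (fun s => f s ∈ t), (X s ∩ Y j).card :=
  sum_fiberwise_eq_sum_filter _ _ _ _

theorem card_upp (hXdis : Pairwise (Disjoint on X)) (Z : Finset U) :
    (upp X Z).card = ∑ s ∈ univ.filter (fun s => (X s ∩ Z).Nonempty), (X s).card :=
  card_biUnion fun _ _ _ _ hst => hXdis hst

end Confusion

theorem stmt12_general (U : Type) [DecidableEq U]
    (m k : ℕ) (X : Fin m → Finset U) (Y : Fin k → Finset U)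
    (f : Fin m → Fin k)
    (hXdis : ∀ s t : Fin m, s ≠ t → Disjoint (X s) (X t))
    (hXne : ∀ s, (X s).Nonempty)
    (hYdis : ∀ i j : Fin k, i ≠ j → Disjoint (Y i) (Y j))
    (hYcov : ∀ u : U, ∃ i, u ∈ Y i)
    (hmrc : ∀ s j, (X s ∩ Y j).card ≤ (X s ∩ Y (f s)).card)
    :
    ∀ j,
      conf X Y f j j - ind (∑ i ∈ Finset.univ.filter (fun i => i ≠ j), conf X Y f j i) ≤
        conf X Y f j j + ∑ i ∈ Finset.univ.filter (fun i => i ≠ j),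
          (conf X Y f j i + 2 * conf X Y f i j) ∧
      conf X Y f j j + ∑ i ∈ Finset.univ.filter (fun i => i ≠ j),
          (conf X Y f j i + 2 * conf X Y f i j) ≤
        (upp X (Y j)).card := by
  intro j
  refine ⟨(Nat.sub_le _ _).trans (Nat.le_add_right _ _), ?_⟩
  have hcontrib : ∀ s, (if f s = j then (X s).card else 2 * (X s ∩ Y j).card) ≤
      if (X s ∩ Y j).Nonempty then (X s).card else 0 := by
    intro s
    by_cases hs : f s = j
    · have hmeet := inter_nonempty_of_forall_card_inter_le (hXne s) hYcov (hs ▸ hmrc s)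
      simp [hs, hmeet]
    · split_ifs with hmeet
      · exact two_mul_card_inter_le_card (hYdis j (f s) (Ne.symm hs)) (hmrc s j)
      · simp [not_nonempty_iff_eq_empty.mp hmeet]
  have hrow := sum_conf_row X Y f (fun i i' => hYdis i i') hYcov j
  rw [← add_sum_erase _ _ (mem_univ j), ← filter_ne'] at hrow
  calc conf X Y f j j + ∑ i ∈ univ.filter (fun i => i ≠ j), (conf X Y f j i + 2 * conf X Y f i j)
      = ∑ s, if f s = j then (X s).card else 2 * (X s ∩ Y j).card := by
        rw [sum_add_distrib, ← mul_sum, ← add_assoc, hrow, sum_conf_col, sum_ite, mul_sum]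
        simp only [mem_filter, mem_univ, true_and]
    _ ≤ ∑ s, if (X s ∩ Y j).Nonempty then (X s).card else 0 := sum_le_sum fun s _ => hcontrib s
    _ = (upp X (Y j)).card := by rw [card_upp X (fun s t => hXdis s t), sum_filter]

theorem stmt12 (U : Type) [Fintype U] [DecidableEq U] [Nonempty U]
    (m k : ℕ) (X : Fin m → Finset U) (Y : Fin k → Finset U)
    (f : Fin m → Fin k)
    (hXdis : ∀ s t : Fin m, s ≠ t → Disjoint (X s) (X t))
    (hXcov : ∀ u : U, ∃ s, u ∈ X s)
    (hXne : ∀ s, (X s).Nonempty)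
    (hYdis : ∀ i j : Fin k, i ≠ j → Disjoint (Y i) (Y j))
    (hYcov : ∀ u : U, ∃ i, u ∈ Y i)
    (hk : 1 < k)
    (hmrc : ∀ s j, (X s ∩ Y j).card ≤ (X s ∩ Y (f s)).card)
    :
    ∀ j,
      conf X Y f j j - ind (∑ i ∈ Finset.univ.filter (fun i => i ≠ j), conf X Y f j i) ≤
        conf X Y f j j + ∑ i ∈ Finset.univ.filter (fun i => i ≠ j),
          (conf X Y f j i + 2 * conf X Y f i j) ∧
      conf X Y f j j + ∑ i ∈ Finset.univ.filter (fun i => i ≠ j),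
          (conf X Y f j i + 2 * conf X Y f i j) ≤
        (upp X (Y j)).card :=
  stmt12_general U m k X Y f hXdis hXne hYdis hYcov hmrc
end

section
/- If a classifier f satisfies X ∩ f(X) ≠ ∅ for all granules X, then for every i, |Low(Y_i)| ≤ n_{ii} and |Upp(Y_i)| ≥ n_{i•} + n_{•i} − n_{ii}, where n_{i•} and n_{•i} are the i-th row and column sums of the confusion matrix. -/
open Finset

/-
The granules predicted as `Y i` form the set `hatY X f i`, whose intersection with `Y i` has
`n_ii` elements, while `hatY X f i` and `Y i` have `n_i•` and `n_•i` elements. Since every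
granule meets its predicted class, a granule inside `Y i` is predicted as `Y i`, so
`Low (Y i) ⊆ hatY X f i ∩ Y i`; and every granule meeting `hatY X f i ∪ Y i` meets `Y i`,
so `hatY X f i ∪ Y i ⊆ Upp (Y i)`. Inclusion–exclusion gives the second bound.
-/

section Partition

variable {U ι : Type*} [DecidableEq U]

theorem sum_card_inter_eq_card [Fintype ι] (Y : ι → Finset U)
    (hYdis : ∀ i j, i ≠ j → Disjoint (Y i) (Y j)) (hYcov : ∀ u, ∃ i, u ∈ Y i) (A : Finset U) :
    ∑ j, (A ∩ Y j).card = A.card := by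
  rw [← card_biUnion fun i _ j _ hij => (hYdis i j hij).mono inter_subset_right inter_subset_right]
  congr 1
  ext u
  simp only [mem_biUnion, mem_univ, true_and, mem_inter]
  exact ⟨fun ⟨_, hu, _⟩ => hu, fun hu => (hYcov u).imp fun _ hj => ⟨hu, hj⟩⟩

theorem card_biUnion_inter (S : Finset ι) (X : ι → Finset U)
    (hXdis : ∀ s t, s ≠ t → Disjoint (X s) (X t)) (Z : Finset U) :
    (S.biUnion X ∩ Z).card = ∑ s ∈ S, (X s ∩ Z).card := by
  rw [biUnion_inter, card_biUnion fun s _ t _ hst =>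
    (hXdis s t hst).mono inter_subset_left inter_subset_left]

theorem eq_of_inter_nonempty {Y : ι → Finset U} (hYdis : ∀ i j, i ≠ j → Disjoint (Y i) (Y j))
    {A : Finset U} {i j : ι} (hi : (A ∩ Y i).Nonempty) (hj : A ⊆ Y j) : i = j := by
  by_contra hij
  obtain ⟨u, hu⟩ := hi
  exact disjoint_left.mp (hYdis i j hij) (mem_inter.mp hu).2 (hj (mem_inter.mp hu).1)

end Partition

section Classifier

variable {U : Type} [DecidableEq U] {m k : ℕ} {X : Fin m → Finset U} {Y : Fin k → Finset U}
  {f : Fin m → Fin k}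

theorem card_hatY_inter (hXdis : ∀ s t, s ≠ t → Disjoint (X s) (X t)) (i j : Fin k) :
    (hatY X f i ∩ Y j).card = conf X Y f i j :=
  card_biUnion_inter _ X hXdis (Y j)

theorem card_hatY (hXdis : ∀ s t, s ≠ t → Disjoint (X s) (X t))
    (hYdis : ∀ i j, i ≠ j → Disjoint (Y i) (Y j)) (hYcov : ∀ u, ∃ i, u ∈ Y i) (i : Fin k) :
    (hatY X f i).card = ∑ j, conf X Y f i j := by
  simp only [← card_hatY_inter hXdis, sum_card_inter_eq_card Y hYdis hYcov]

theorem card_eq_sum_conf (hXdis : ∀ s t, s ≠ t → Disjoint (X s) (X t))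
    (hXcov : ∀ u, ∃ s, u ∈ X s) (i : Fin k) :
    (Y i).card = ∑ j, conf X Y f j i := by
  rw [← sum_card_inter_eq_card X hXdis hXcov (Y i)]
  simp only [conf, sum_fiberwise univ f fun s => (X s ∩ Y i).card, inter_comm]

theorem low_subset_hatY_inter (hYdis : ∀ i j, i ≠ j → Disjoint (Y i) (Y j))
    (hf : ∀ s, (X s ∩ Y (f s)).Nonempty) (i : Fin k) :
    low X (Y i) ⊆ hatY X f i ∩ Y i := by
  intro u hu
  obtain ⟨s, hs, hus⟩ := mem_biUnion.mp hu
  have hsub : X s ⊆ Y i := (mem_filter.mp hs).2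
  refine mem_inter.mpr ⟨mem_biUnion.mpr ⟨s, ?_, hus⟩, hsub hus⟩
  exact mem_filter.mpr ⟨mem_univ s, eq_of_inter_nonempty hYdis (hf s) hsub⟩

theorem hatY_union_subset_upp (hXcov : ∀ u, ∃ s, u ∈ X s)
    (hf : ∀ s, (X s ∩ Y (f s)).Nonempty) (i : Fin k) :
    hatY X f i ∪ Y i ⊆ upp X (Y i) := by
  intro u hu
  refine mem_biUnion.mpr ?_
  rcases mem_union.mp hu with hu | hu
  · obtain ⟨s, hs, hus⟩ := mem_biUnion.mp hu
    refine ⟨s, mem_filter.mpr ⟨mem_univ s, ?_⟩, hus⟩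
    rw [← (mem_filter.mp hs).2]
    exact hf s
  · obtain ⟨s, hs⟩ := hXcov u
    exact ⟨s, mem_filter.mpr ⟨mem_univ s, u, mem_inter.mpr ⟨hs, hu⟩⟩, hs⟩

end Classifier

theorem stmt16_general (U : Type) [DecidableEq U]
    (m k : ℕ) (X : Fin m → Finset U) (Y : Fin k → Finset U)
    (f : Fin m → Fin k)
    (hXdis : ∀ s t : Fin m, s ≠ t → Disjoint (X s) (X t))
    (hXcov : ∀ u : U, ∃ s, u ∈ X s)
    (hYdis : ∀ i j : Fin k, i ≠ j → Disjoint (Y i) (Y j))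
    (hYcov : ∀ u : U, ∃ i, u ∈ Y i)
    (hf : ∀ s, (X s ∩ Y (f s)).Nonempty)
    :
    ∀ i,
      (low X (Y i)).card ≤ conf X Y f i i ∧
      (∑ j, conf X Y f i j) + (∑ j, conf X Y f j i) - conf X Y f i i ≤
        (upp X (Y i)).card := by
  intro i
  have hdiag := card_hatY_inter (f := f) (Y := Y) hXdis i i
  refine ⟨hdiag ▸ card_le_card (low_subset_hatY_inter hYdis hf i), ?_⟩
  rw [← card_hatY hXdis hYdis hYcov, ← card_eq_sum_conf hXdis hXcov, ← hdiag,
    ← card_union_add_card_inter, Nat.add_sub_cancel]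
  exact card_le_card (hatY_union_subset_upp hXcov hf i)

theorem stmt16 (U : Type) [Fintype U] [DecidableEq U] [Nonempty U]
    (m k : ℕ) (X : Fin m → Finset U) (Y : Fin k → Finset U)
    (f : Fin m → Fin k)
    (hXdis : ∀ s t : Fin m, s ≠ t → Disjoint (X s) (X t))
    (hXcov : ∀ u : U, ∃ s, u ∈ X s)
    (hXne : ∀ s, (X s).Nonempty)
    (hYdis : ∀ i j : Fin k, i ≠ j → Disjoint (Y i) (Y j))
    (hYcov : ∀ u : U, ∃ i, u ∈ Y i)
    (hf : ∀ s, (X s ∩ Y (f s)).Nonempty)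
    :
    ∀ i,
      (low X (Y i)).card ≤ conf X Y f i i ∧
      (∑ j, conf X Y f i j) + (∑ j, conf X Y f j i) - conf X Y f i i ≤
        (upp X (Y i)).card :=
  stmt16_general U m k X Y f hXdis hXcov hYdis hYcov hf
end
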